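/- For a bivariate centered Gaussian (u,v) with Var(u) = Var(v) = 1 and correlation ρ ∈ [−1,1], one has E[ReLU(u)·ReLU(v)] = (√(1−ρ²) + (π − arccos ρ)·ρ)/(2π) and E[1_{u>0}·1_{v>0}] = 1/2 − arccos(ρ)/(2π). -/

import Mathlib

open MeasureTheory ProbabilityTheory Real

open Set Filter
open scoped NNReal ENNReal

-- radial integrals
lemma stmt14_radial1 : ∫ r in Set.Ioi (0:ℝ), r * rexp (-r^2/2) = 1 := by
  have hint : IntegrableOn (fun r : ℝ => r * rexp (-r^2/2)) (Set.Ioi 0) := by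
    have := integrableOn_rpow_mul_exp_neg_mul_sq (by norm_num : (0:ℝ) < 1/2)
      (s := 1) (by norm_num)
    refine this.congr_fun (fun x hx => ?_) measurableSet_Ioi
    beta_reduce; rw [Real.rpow_one]
    ring_nf
  have hderiv : ∀ x ∈ Set.Ici (0:ℝ),
      HasDerivAt (fun r : ℝ => -rexp (-r^2/2)) (x * rexp (-x^2/2)) x := by
    intro x _
    have h1 : HasDerivAt (fun r : ℝ => -r^2/2) (-x) x := by
      have := ((hasDerivAt_pow 2 x).neg.div_const 2)
      refine this.congr_deriv ?_
      norm_num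
      try ring
    have := (h1.exp).neg
    refine this.congr_deriv ?_
    ring
  have htend : Tendsto (fun r : ℝ => -rexp (-r^2/2)) atTop (nhds 0) := by
    have h1 : Tendsto (fun r : ℝ => r^2/2) atTop atTop :=
      (tendsto_pow_atTop (two_ne_zero)).atTop_div_const (by norm_num)
    have := (tendsto_exp_neg_atTop_nhds_zero.comp h1).neg
    simpa [Function.comp_def, neg_div] using this
  have := integral_Ioi_of_hasDerivAt_of_tendsto' hderiv hint htend
  simp at this
  simpa using this

lemma stmt14_radial3 : ∫ r in Set.Ioi (0:ℝ), r^3 * rexp (-r^2/2) = 2 := by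
  have hint : IntegrableOn (fun r : ℝ => r^3 * rexp (-r^2/2)) (Set.Ioi 0) := by
    have := integrableOn_rpow_mul_exp_neg_mul_sq (by norm_num : (0:ℝ) < 1/2)
      (s := 3) (by norm_num)
    refine this.congr_fun (fun x hx => ?_) measurableSet_Ioi
    beta_reduce; rw [show ((3:ℝ)) = ((3:ℕ):ℝ) by norm_num, Real.rpow_natCast]
    ring_nf
  have hderiv : ∀ x ∈ Set.Ici (0:ℝ),
      HasDerivAt (fun r : ℝ => -(r^2+2) * rexp (-r^2/2)) (x^3 * rexp (-x^2/2)) x := by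
    intro x _
    have h1 : HasDerivAt (fun r : ℝ => -r^2/2) (-x) x := by
      have := ((hasDerivAt_pow 2 x).neg.div_const 2)
      refine this.congr_deriv ?_
      norm_num
      try ring
    have h2 : HasDerivAt (fun r : ℝ => -(r^2+2)) (-(2*x)) x := by
      have := ((hasDerivAt_pow 2 x).add_const 2).neg
      refine this.congr_deriv ?_
      norm_num
      try ring
    have := h2.mul h1.exp
    refine this.congr_deriv ?_
    ring
  have htend : Tendsto (fun r : ℝ => -(r^2+2) * rexp (-r^2/2)) atTop (nhds 0) := by
    have h1 : Tendsto (fun r : ℝ => r^2/2) atTop atTop :=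
      (tendsto_pow_atTop (two_ne_zero)).atTop_div_const (by norm_num)
    have h2 : Tendsto (fun t : ℝ => -(2*(t^1*rexp (-t)) + 2*rexp (-t))) atTop (nhds 0) := by
      have := (((tendsto_pow_mul_exp_neg_atTop_nhds_zero 1).const_mul 2).add
        (tendsto_exp_neg_atTop_nhds_zero.const_mul 2)).neg
      simpa using this
    have := h2.comp h1
    refine this.congr fun r => ?_
    simp only [Function.comp_def]
    rw [pow_one]
    ring_nf
  have := integral_Ioi_of_hasDerivAt_of_tendsto' hderiv hint htend
  simp at this
  simpa using this

lemma stmt14_cos_mul_cos (θ α : ℝ) :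
    Real.cos θ * Real.cos (θ - α) = (Real.cos (2*θ - α) + Real.cos α)/2 := by
  have h1 : Real.cos (2*θ - α) = Real.cos θ * Real.cos (θ - α) - Real.sin θ * Real.sin (θ - α) := by
    rw [show 2*θ - α = θ + (θ - α) by ring, Real.cos_add]
  have h2 : Real.cos α = Real.cos θ * Real.cos (θ - α) + Real.sin θ * Real.sin (θ - α) := by
    rw [show α = θ - (θ - α) by ring, Real.cos_sub]
    ring_nf
  rw [h1, h2]
  ring

lemma stmt14_angInt (α : ℝ) (h0 : 0 ≤ α) (h : α ≤ π) :
    ∫ θ in Set.Ioo (α - π/2) (π/2), Real.cos θ * Real.cos (θ - α) =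
      (Real.sin α + (π - α) * Real.cos α)/2 := by
  have hle : α - π/2 ≤ π/2 := by linarith
  rw [← integral_Ioc_eq_integral_Ioo, ← intervalIntegral.integral_of_le hle]
  have hderiv : ∀ θ ∈ Set.uIcc (α - π/2) (π/2),
      HasDerivAt (fun θ : ℝ => Real.sin (2*θ - α)/4 + θ * (Real.cos α/2))
        (Real.cos θ * Real.cos (θ - α)) θ := by
    intro θ _
    have h1 : HasDerivAt (fun θ : ℝ => 2*θ - α) 2 θ := by
      simpa using ((hasDerivAt_id θ).const_mul 2).sub_const α
    have h2 := ((h1.sin).div_const 4).add (hasDerivAt_mul_const (Real.cos α/2))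
    refine h2.congr_deriv ?_
    rw [stmt14_cos_mul_cos]
    ring
  rw [intervalIntegral.integral_eq_sub_of_hasDerivAt hderiv (by
    apply Continuous.intervalIntegrable; continuity)]
  have e1 : Real.sin (2*(π/2) - α) = Real.sin α := by
    rw [show 2*(π/2) - α = π - α by ring, Real.sin_pi_sub]
  have e2 : Real.sin (2*(α - π/2) - α) = -Real.sin α := by
    rw [show 2*(α - π/2) - α = α - π by ring, Real.sin_sub_pi]
  rw [e1, e2]
  ring

lemma stmt14_cone_iff {α θ : ℝ} (hα0 : 0 ≤ α) (hαπ : α ≤ π) (hθ : θ ∈ Set.Ioo (-π) π) :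
    (0 < Real.cos θ ∧ 0 < Real.cos (θ - α)) ↔ θ ∈ Set.Ioo (α - π/2) (π/2) := by
  obtain ⟨hθ1, hθ2⟩ := hθ
  constructor
  · rintro ⟨h1, h2⟩
    have hb : θ < π/2 := by
      by_contra hc; push_neg at hc
      have := Real.cos_nonpos_of_pi_div_two_le_of_le hc (by linarith)
      linarith
    have ha : -(π/2) < θ := by
      by_contra hc; push_neg at hc
      have := Real.cos_nonpos_of_pi_div_two_le_of_le (x := -θ) (by linarith) (by linarith)
      rw [Real.cos_neg] at this
      linarith
    refine ⟨?_, hb⟩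
    by_contra hc; push_neg at hc
    have := Real.cos_nonpos_of_pi_div_two_le_of_le (x := -(θ - α)) (by linarith) (by linarith)
    rw [Real.cos_neg] at this
    linarith
  · rintro ⟨h1, h2⟩
    exact ⟨Real.cos_pos_of_mem_Ioo ⟨by linarith, h2⟩,
      Real.cos_pos_of_mem_Ioo ⟨by linarith, by linarith⟩⟩

lemma stmt14_gauss_prod :
    (gaussianReal 0 1).prod (gaussianReal 0 1) =
      (volume : Measure (ℝ × ℝ)).withDensity
        (fun z => ENNReal.ofReal ((2*π)⁻¹ * rexp (-(z.1^2 + z.2^2)/2))) := by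
  have hd : ∀ z : ℝ × ℝ, gaussianPDF 0 1 z.1 * gaussianPDF 0 1 z.2 =
      ENNReal.ofReal ((2*π)⁻¹ * rexp (-(z.1^2 + z.2^2)/2)) := by
    intro z
    simp only [gaussianPDF_def]
    rw [← ENNReal.ofReal_mul (gaussianPDFReal_nonneg _ _ _)]
    congr 1
    simp only [gaussianPDFReal, NNReal.coe_one, mul_one, sub_zero]
    rw [show ((√(2*π))⁻¹ * rexp (-z.1^2/2)) * ((√(2*π))⁻¹ * rexp (-z.2^2/2))
        = ((√(2*π))⁻¹ * (√(2*π))⁻¹) * (rexp (-z.1^2/2) * rexp (-z.2^2/2)) by ring,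
      ← Real.exp_add, ← mul_inv, Real.mul_self_sqrt (by positivity)]
    congr 1
    ring
  refine Measure.prod_eq fun s t hs ht => ?_
  rw [withDensity_apply _ (hs.prod ht)]
  calc ∫⁻ z in s ×ˢ t, ENNReal.ofReal ((2*π)⁻¹ * rexp (-(z.1^2 + z.2^2)/2))
        ∂(volume : Measure (ℝ × ℝ))
      = ∫⁻ z in s ×ˢ t, gaussianPDF 0 1 z.1 * gaussianPDF 0 1 z.2
        ∂(volume : Measure (ℝ × ℝ)) := by
        refine lintegral_congr fun z => (hd z).symm
    _ = ∫⁻ z, gaussianPDF 0 1 z.1 * gaussianPDF 0 1 z.2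
        ∂((volume.restrict s).prod (volume.restrict t)) := by
        rw [Measure.volume_eq_prod, Measure.prod_restrict]
    _ = (∫⁻ x in s, gaussianPDF 0 1 x) * ∫⁻ y in t, gaussianPDF 0 1 y :=
        lintegral_prod_mul (measurable_gaussianPDF 0 1).aemeasurable
          (measurable_gaussianPDF 0 1).aemeasurable
    _ = (gaussianReal 0 1) s * (gaussianReal 0 1) t := by
        rw [gaussianReal_apply _ one_ne_zero, gaussianReal_apply _ one_ne_zero]

/-- For a bivariate centered Gaussian `(u,v)` with unit variances and correlation
`ρ ∈ [−1,1]` — realized as `u = z₁`, `v = ρ z₁ + √(1−ρ²) z₂` for independent standard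
Gaussians `z₁, z₂` — one has
`E[ReLU(u)·ReLU(v)] = (√(1−ρ²) + (π − arccos ρ)·ρ)/(2π)` and
`E[1_{u>0} 1_{v>0}] = P(u > 0, v > 0) = 1/2 − arccos(ρ)/(2π)`. -/
theorem stmt14 (ρ : ℝ) (hρ₁ : -1 ≤ ρ) (hρ₂ : ρ ≤ 1) :
    (∫ z : ℝ × ℝ, max z.1 0 * max (ρ * z.1 + Real.sqrt (1 - ρ ^ 2) * z.2) 0
        ∂((gaussianReal 0 1).prod (gaussianReal 0 1))) =
      (Real.sqrt (1 - ρ ^ 2) + (π - Real.arccos ρ) * ρ) / (2 * π) ∧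
    (((gaussianReal 0 1).prod (gaussianReal 0 1))
        {z : ℝ × ℝ | 0 < z.1 ∧ 0 < ρ * z.1 + Real.sqrt (1 - ρ ^ 2) * z.2}).toReal =
      1 / 2 - Real.arccos ρ / (2 * π) := by
  have hπ := Real.pi_pos
  set α := Real.arccos ρ with hα
  have hα0 : 0 ≤ α := Real.arccos_nonneg ρ
  have hαπ : α ≤ π := Real.arccos_le_pi ρ
  have hcos : Real.cos α = ρ := Real.cos_arccos hρ₁ hρ₂
  have hsin : Real.sin α = Real.sqrt (1 - ρ ^ 2) := Real.sin_arccos ρ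
  have htarget : polarCoord.target = Set.Ioi (0:ℝ) ×ˢ Set.Ioo (-π) π := rfl
  have hsub : Set.Ioo (α - π/2) (π/2) ⊆ Set.Ioo (-π) π :=
    Set.Ioo_subset_Ioo (by linarith) (by linarith)
  -- the common reduction to a polar-coordinates integral
  have key : ∀ F : ℝ × ℝ → ℝ,
      (∫ z, F z ∂((gaussianReal 0 1).prod (gaussianReal 0 1))) =
        ∫ p in polarCoord.target,
          p.1 • ((fun z : ℝ × ℝ => ((2*π)⁻¹ * rexp (-(z.1^2 + z.2^2)/2)) * F z)
            (polarCoord.symm p)) := by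
    intro F
    rw [stmt14_gauss_prod,
      integral_comp_polarCoord_symm
        (fun z : ℝ × ℝ => ((2*π)⁻¹ * rexp (-(z.1^2 + z.2^2)/2)) * F z)]
    have hm : Measurable
        (fun z : ℝ × ℝ => Real.toNNReal ((2*π)⁻¹ * rexp (-(z.1^2 + z.2^2)/2))) := by
      apply Measurable.real_toNNReal
      fun_prop
    have hrfl : (fun z : ℝ × ℝ => ENNReal.ofReal ((2*π)⁻¹ * rexp (-(z.1^2 + z.2^2)/2)))
        = (fun z : ℝ × ℝ =>
          ((Real.toNNReal ((2*π)⁻¹ * rexp (-(z.1^2 + z.2^2)/2)) : ℝ≥0) : ℝ≥0∞)) := rfl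
    rw [hrfl, integral_withDensity_eq_integral_smul hm F]
    congr 1
    funext z
    rw [NNReal.smul_def, Real.coe_toNNReal _ (by positivity), smul_eq_mul]
  constructor
  · -- first statement
    rw [key (fun z : ℝ × ℝ => max z.1 0 * max (ρ * z.1 + Real.sqrt (1 - ρ ^ 2) * z.2) 0)]
    have hcongr : Set.EqOn
        (fun p : ℝ × ℝ => p.1 • ((fun z : ℝ × ℝ => ((2*π)⁻¹ * rexp (-(z.1^2 + z.2^2)/2)) *
          (max z.1 0 * max (ρ * z.1 + Real.sqrt (1 - ρ ^ 2) * z.2) 0)) (polarCoord.symm p)))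
        (fun p : ℝ × ℝ => ((2*π)⁻¹ * (p.1^3 * rexp (-p.1^2/2))) *
          (max (Real.cos p.2) 0 * max (Real.cos (p.2 - α)) 0))
        polarCoord.target := by
      rintro ⟨r, θ⟩ hp
      rw [htarget] at hp
      obtain ⟨hr, hθ⟩ := hp
      simp only [polarCoord_symm_apply]
      have hr' : (0:ℝ) < r := hr
      have hcs : (r * Real.cos θ)^2 + (r * Real.sin θ)^2 = r^2 := by
        have h := Real.sin_sq_add_cos_sq θ
        nlinarith [h]
      have hmax1 : max (r * Real.cos θ) 0 = r * max (Real.cos θ) 0 := by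
        rw [mul_max_of_nonneg _ _ hr'.le, mul_zero]
      have hmax2 : ρ * (r * Real.cos θ) + Real.sqrt (1 - ρ ^ 2) * (r * Real.sin θ)
          = r * Real.cos (θ - α) := by
        rw [Real.cos_sub, hcos, hsin]; ring
      have hmax3 : max (ρ * (r * Real.cos θ) + Real.sqrt (1 - ρ ^ 2) * (r * Real.sin θ)) 0
          = r * max (Real.cos (θ - α)) 0 := by
        rw [hmax2, mul_max_of_nonneg _ _ hr'.le, mul_zero]
      simp only [smul_eq_mul]
      rw [hcs, hmax1, hmax3]
      ring
    rw [setIntegral_congr_fun polarCoord.open_target.measurableSet hcongr, htarget,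
      Measure.volume_eq_prod, ← Measure.prod_restrict,
      integral_prod_mul (fun r : ℝ => (2*π)⁻¹ * (r^3 * rexp (-r^2/2)))
        (fun θ : ℝ => max (Real.cos θ) 0 * max (Real.cos (θ - α)) 0)]
    have hrad : ∫ r in Set.Ioi (0:ℝ), (2*π)⁻¹ * (r^3 * rexp (-r^2/2)) = (2*π)⁻¹ * 2 := by
      rw [integral_const_mul, stmt14_radial3]
    have hang : ∫ θ in Set.Ioo (-π) π, max (Real.cos θ) 0 * max (Real.cos (θ - α)) 0
        = (Real.sin α + (π - α) * Real.cos α)/2 := by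
      have hc2 : Set.EqOn
          (fun θ : ℝ => max (Real.cos θ) 0 * max (Real.cos (θ - α)) 0)
          (fun θ : ℝ => (Set.Ioo (α - π/2) (π/2)).indicator
            (fun θ => Real.cos θ * Real.cos (θ - α)) θ)
          (Set.Ioo (-π) π) := by
        intro θ hθ
        by_cases hmem : θ ∈ Set.Ioo (α - π/2) (π/2)
        · have hpos := (stmt14_cone_iff hα0 hαπ hθ).mpr hmem
          simp only [Set.indicator_of_mem hmem]
          rw [max_eq_left hpos.1.le, max_eq_left hpos.2.le]
        · have hn : ¬(0 < Real.cos θ ∧ 0 < Real.cos (θ - α)) := fun hc =>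
            hmem ((stmt14_cone_iff hα0 hαπ hθ).mp hc)
          simp only [Set.indicator_of_notMem hmem]
          rcases not_and_or.mp hn with h | h <;> push_neg at h
          · rw [max_eq_right h]; ring
          · rw [max_eq_right h]; ring
      rw [setIntegral_congr_fun measurableSet_Ioo hc2,
        setIntegral_indicator measurableSet_Ioo,
        Set.inter_eq_self_of_subset_right hsub, stmt14_angInt α hα0 hαπ]
    rw [hrad, hang, hsin, hcos]
    field_simp
  · -- second statement
    set S : Set (ℝ × ℝ) := {z : ℝ × ℝ | 0 < z.1 ∧ 0 < ρ * z.1 + Real.sqrt (1 - ρ ^ 2) * z.2}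
      with hSdef
    have hS : MeasurableSet S := by
      have : S = {z : ℝ × ℝ | 0 < z.1} ∩ {z : ℝ × ℝ | 0 < ρ * z.1 + Real.sqrt (1 - ρ ^ 2) * z.2} := rfl
      rw [this]
      exact (measurableSet_lt measurable_const measurable_fst).inter
        (measurableSet_lt measurable_const (by fun_prop))
    rw [← measureReal_def, ← integral_indicator_one hS, key (S.indicator 1)]
    have hcongr : Set.EqOn
        (fun p : ℝ × ℝ => p.1 • ((fun z : ℝ × ℝ => ((2*π)⁻¹ * rexp (-(z.1^2 + z.2^2)/2)) *
          S.indicator 1 z) (polarCoord.symm p)))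
        (fun p : ℝ × ℝ => ((2*π)⁻¹ * (p.1 * rexp (-p.1^2/2))) *
          ((Set.Ioo (α - π/2) (π/2)).indicator 1 p.2))
        polarCoord.target := by
      rintro ⟨r, θ⟩ hp
      rw [htarget] at hp
      obtain ⟨hr, hθ⟩ := hp
      simp only [polarCoord_symm_apply]
      have hr' : (0:ℝ) < r := hr
      have hcs : (r * Real.cos θ)^2 + (r * Real.sin θ)^2 = r^2 := by
        have h := Real.sin_sq_add_cos_sq θ
        nlinarith [h]
      have hmax2 : ρ * (r * Real.cos θ) + Real.sqrt (1 - ρ ^ 2) * (r * Real.sin θ)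
          = r * Real.cos (θ - α) := by
        rw [Real.cos_sub, hcos, hsin]; ring
      have hiff : (r * Real.cos θ, r * Real.sin θ) ∈ S ↔ θ ∈ Set.Ioo (α - π/2) (π/2) := by
        rw [← stmt14_cone_iff hα0 hαπ hθ, hSdef]
        simp only [Set.mem_setOf_eq, hmax2]
        rw [mul_pos_iff_of_pos_left hr', mul_pos_iff_of_pos_left hr']
      have hind : S.indicator (1 : ℝ × ℝ → ℝ) (r * Real.cos θ, r * Real.sin θ)
          = (Set.Ioo (α - π/2) (π/2)).indicator (1 : ℝ → ℝ) θ := by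
        simp only [Set.indicator_apply]
        exact if_congr hiff rfl rfl
      simp only [smul_eq_mul]
      rw [hcs, hind]
      ring
    rw [setIntegral_congr_fun polarCoord.open_target.measurableSet hcongr, htarget,
      Measure.volume_eq_prod, ← Measure.prod_restrict,
      integral_prod_mul (fun r : ℝ => (2*π)⁻¹ * (r * rexp (-r^2/2)))
        (fun θ : ℝ => (Set.Ioo (α - π/2) (π/2)).indicator 1 θ)]
    have hrad : ∫ r in Set.Ioi (0:ℝ), (2*π)⁻¹ * (r * rexp (-r^2/2)) = (2*π)⁻¹ := by
      rw [integral_const_mul, stmt14_radial1, mul_one]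
    have hang : ∫ θ in Set.Ioo (-π) π, (Set.Ioo (α - π/2) (π/2)).indicator (1 : ℝ → ℝ) θ
        = π - α := by
      rw [setIntegral_indicator measurableSet_Ioo,
        Set.inter_eq_self_of_subset_right hsub]
      simp only [Pi.one_apply]
      rw [setIntegral_const, measureReal_def, Real.volume_Ioo, smul_eq_mul, mul_one,
        ENNReal.toReal_ofReal (by linarith)]
      ring
    rw [hrad, hang]
    field_simp
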